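/- Let S = {n₁, n₂, n₃} be a set of three distinct nonzero integers. If S is not of the form {−n, n, 2n} for some integer n, then the angular Kronecker constant satisfies α(S) < 1/3. -/

import Mathlib

/-- Distance from a real number to the nearest integer. -/
noncomputable def distNearestInt (t : ℝ) : ℝ := ⨅ k : ℤ, |t - (k : ℝ)|

/-- The angular Kronecker constant of a finite set of integers: the infimum of all `ε ≥ 0`
such that every target `φ : ℤ → ℝ` can be interpolated to within `ε` (in the distance to the
nearest integer) by some `x ∈ ℝ` on the set `S`. -/
noncomputable def angularKronecker (S : Finset ℤ) : ℝ :=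
  sInf {ε : ℝ | 0 ≤ ε ∧ ∀ φ : ℤ → ℝ, ∃ x : ℝ, ∀ n ∈ S, distNearestInt ((n : ℝ) * x - φ n) ≤ ε}

/-!
If two of the frequencies are `p` and `-p` and the third is `m` with `|m| ∉ {|p|, 2|p|}`, write
`|p| = g A`, `|m| = g B` with `A, B` coprime. By Bezout one can make `A x` hit its target exactly
while `B x` lands within `1 / (2A)` of its target; moving `x` by `s / A` with `|s| ≤ α` trades
an error `α` at `A` for an improvement `B α / A` at `B`. Aiming `A x` at the midpoint of the two
targets of `±p` then gives the bound `max (1/4) ((2 + B) / (4 (A + B)))`, which is `< 1/3`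
exactly when `4 A + B > 6`, i.e. `(A, B) ∉ {(1, 1), (1, 2)}`.

Otherwise the `|nᵢ|` are distinct; let `n₀` have the smallest one. If no `x` approximates the
targets `θᵢ` within `ε = 3/10`, the indicators `χᵢ` of `{x | ‖nᵢ x - θᵢ‖ > ε}` satisfy
`∑ χᵢ ≥ 1`. Integrating `∑ χᵢ - 1 ≥ 0` against `e(n₀ x)` over a period kills the constant and
every `χᵢ` with `nᵢ ∤ n₀`, and leaves from `χ₀` a coefficient of modulus `sin (2πε) / π`; but the
integral is at most `3 (1 - 2ε) - 1` in modulus, a contradiction.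
-/

open Set Real Function MeasureTheory FourierTransform
open Complex (I)

theorem distNearestInt_eq_abs_sub_round (t : ℝ) : distNearestInt t = |t - round t| :=
  le_antisymm (ciInf_le ⟨0, by rintro _ ⟨k, rfl⟩; positivity⟩ (round t))
    (le_ciInf (round_le t))

theorem distNearestInt_eq_norm (t : ℝ) : distNearestInt t = ‖(t : UnitAddCircle)‖ := by
  rw [distNearestInt_eq_abs_sub_round, UnitAddCircle.norm_eq]

theorem distNearestInt_le_abs (t : ℝ) : distNearestInt t ≤ |t| := by
  simpa [distNearestInt_eq_abs_sub_round] using round_le t 0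

theorem distNearestInt_add_intCast (t : ℝ) (k : ℤ) : distNearestInt (t + k) = distNearestInt t := by
  simp only [distNearestInt_eq_abs_sub_round, round_add_intCast, Int.cast_add,
    add_sub_add_right_eq_sub]

theorem distNearestInt_neg (t : ℝ) : distNearestInt (-t) = distNearestInt t := by
  rw [distNearestInt_eq_norm, distNearestInt_eq_norm, AddCircle.coe_neg, norm_neg]

theorem distNearestInt_add_le (s t : ℝ) :
    distNearestInt (s + t) ≤ distNearestInt s + distNearestInt t := by
  simp only [distNearestInt_eq_norm, AddCircle.coe_add]
  exact norm_add_le _ _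

theorem continuous_distNearestInt : Continuous distNearestInt := by
  simp only [funext distNearestInt_eq_norm]
  exact continuous_norm.comp (AddCircle.continuous_mk' 1)

theorem distNearestInt_of_mem_Icc {y : ℝ} (hy : y ∈ Icc (0 : ℝ) 1) :
    distNearestInt y = min y (1 - y) := by
  rw [distNearestInt_eq_abs_sub_round, abs_sub_round_eq_min]
  rcases hy.2.lt_or_eq with h | rfl
  · rw [Int.fract_eq_self.mpr ⟨hy.1, h⟩]
  · simp

-- Frequencies are indexed, so a repeated frequency may carry independent targets.
def KroneckerApprox {ι : Type*} (k : ι → ℤ) (ε : ℝ) : Prop :=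
  ∀ θ : ι → ℝ, ∃ x : ℝ, ∀ i, distNearestInt (k i * x - θ i) ≤ ε

namespace KroneckerApprox

variable {ι : Type*} {k : ι → ℤ} {ε : ℝ}

theorem angularKronecker_le {S : Finset ℤ} (hS : (S : Set ℤ) ⊆ range k) (hε : 0 ≤ ε)
    (h : KroneckerApprox k ε) : angularKronecker S ≤ ε := by
  refine csInf_le ⟨0, fun _ hδ => hδ.1⟩ ⟨hε, fun φ => ?_⟩
  obtain ⟨x, hx⟩ := h (φ ∘ k)
  refine ⟨x, fun n hn => ?_⟩
  obtain ⟨i, rfl⟩ := hS hn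
  exact hx i

theorem of_natAbs_eq {k' : ι → ℤ} (h : KroneckerApprox k ε)
    (hk : ∀ i, (k' i).natAbs = (k i).natAbs) : KroneckerApprox k' ε := by
  intro θ
  obtain ⟨x, hx⟩ := h fun i => if k' i = k i then θ i else -θ i
  refine ⟨x, fun i => ?_⟩
  rcases Int.natAbs_eq_natAbs_iff.mp (hk i) with hi | hi
  · simpa [hi] using hx i
  · by_cases h0 : k i = 0
    · simpa [hi, h0] using hx i
    · have hne : -k i ≠ k i := fun h => h0 (by omega)
      have hxi := hx i
      rw [if_neg (hi ▸ hne), ← distNearestInt_neg] at hxi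
      convert hxi using 2
      rw [hi]; push_cast; ring

theorem const_mul (h : KroneckerApprox k ε) {d : ℤ} (hd : d ≠ 0) :
    KroneckerApprox (fun i => d * k i) ε := by
  intro θ
  obtain ⟨x, hx⟩ := h θ
  refine ⟨x / d, fun i => ?_⟩
  have hd' : (d : ℝ) ≠ 0 := Int.cast_ne_zero.mpr hd
  have hdx : ((d * k i : ℤ) : ℝ) * (x / d) = k i * x := by push_cast; field_simp
  rw [hdx]
  exact hx i

end KroneckerApprox

theorem exists_abs_le_and_abs_add_le {E c δ : ℝ} (hc : 0 ≤ c) (hδ : 0 ≤ δ) (h : |E| ≤ c + δ) :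
    ∃ s, |s| ≤ c ∧ |E + s| ≤ δ := by
  rcases le_or_gt |E| c with hE | hE
  · exact ⟨-E, by rwa [abs_neg], by simpa using hδ⟩
  rcases le_or_gt 0 E with h0 | h0
  · rw [abs_of_nonneg h0] at h hE
    exact ⟨-c, by rw [abs_neg, abs_of_nonneg hc], by rw [abs_le]; constructor <;> linarith⟩
  · rw [abs_of_neg h0] at h hE
    exact ⟨c, by rw [abs_of_nonneg hc], by rw [abs_le]; constructor <;> linarith⟩

theorem exists_distNearestInt_le_of_coprime {A B : ℕ} (hA : 0 < A) (hB : 0 < B)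
    (hAB : A.Coprime B) {α β : ℝ} (hα : 0 ≤ α) (hβ : 0 ≤ β) (h : 1 ≤ 2 * (B * α + A * β))
    (ψ θ : ℝ) : ∃ x : ℝ, distNearestInt (A * x - ψ) ≤ α ∧ distNearestInt (B * x - θ) ≤ β := by
  obtain ⟨u, v, huv⟩ := Nat.isCoprime_iff_coprime.mpr hAB
  have hA' : (0 : ℝ) < A := Nat.cast_pos.mpr hA
  have hB' : (0 : ℝ) < B := Nat.cast_pos.mpr hB
  set r := round (B * ψ - A * θ)
  set E := B * ψ - A * θ - r
  have hE : |E| ≤ B * α + A * β := (abs_sub_round _).trans (by linarith)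
  obtain ⟨s, hs, hEs⟩ := exists_abs_le_and_abs_add_le (by positivity) (by positivity) hE
  have huv' : (u : ℝ) * A + v * B = 1 := by exact_mod_cast huv
  -- On the lattice `A x ∈ ψ + ℤ`, the value `B x - θ` runs through `(E + ℤ) / A`, by Bezout.
  refine ⟨(ψ - r * v + s / B) / A, ?_, ?_⟩
  · have hx : A * ((ψ - r * v + s / B) / A) - ψ = s / B + ((-(r * v) : ℤ) : ℝ) := by
      push_cast; field_simp; ring
    rw [hx, distNearestInt_add_intCast]
    refine (distNearestInt_le_abs _).trans ?_
    rw [abs_div, abs_of_pos hB', div_le_iff₀ hB']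
    linarith
  · have hx : B * ((ψ - r * v + s / B) / A) - θ = (E + s) / A + ((r * u : ℤ) : ℝ) := by
      simp only [E]; push_cast; field_simp; linear_combination (-(r : ℝ)) * huv'
    rw [hx, distNearestInt_add_intCast]
    refine (distNearestInt_le_abs _).trans ?_
    rw [abs_div, abs_of_pos hA', div_le_iff₀ hA']
    linarith

theorem kroneckerApprox_of_coprime {A B : ℕ} (hA : 0 < A) (hB : 0 < B) (hAB : A.Coprime B)
    {ε : ℝ} (hε : 1 / 4 ≤ ε) (h : 2 + B ≤ 4 * (A + B) * ε) :
    KroneckerApprox ![(A : ℤ), A, B] ε := by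
  intro θ
  set d := θ 0 - θ 1 - round (θ 0 - θ 1)
  have hd : |d| ≤ 1 / 2 := abs_sub_round _
  -- Aim `A x` at the midpoint of the two targets `θ 0` and `θ 1 + round (θ 0 - θ 1)`.
  obtain ⟨x, hx₀, hx₂⟩ := exists_distNearestInt_le_of_coprime hA hB hAB
    (α := ε - |d| / 2) (β := ε) (by linarith) (by linarith) (by nlinarith) (θ 0 - d / 2) (θ 2)
  have hmid : ∀ t, distNearestInt (A * x - (θ 0 - d / 2) + t) ≤ ε - |d| / 2 + |t| := fun t =>
    (distNearestInt_add_le _ _).trans (add_le_add hx₀ (distNearestInt_le_abs t))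
  refine ⟨x, Fin.forall_fin_succ.mpr ⟨?_, Fin.forall_fin_succ.mpr ⟨?_, ?_⟩⟩⟩
  · have := hmid (-(d / 2))
    rw [abs_neg, abs_div, abs_two] at this
    convert this using 2 <;> simp; ring
  · have := hmid (d / 2)
    rw [abs_div, abs_two, ← distNearestInt_add_intCast _ (round (θ 0 - θ 1))] at this
    convert this using 2 <;> simp [d]; ring
  · simpa using hx₂

theorem exists_kroneckerApprox_neg_pair {p m : ℤ} (hp : p ≠ 0) (hm : m ≠ 0)
    (h1 : m.natAbs ≠ p.natAbs) (h2 : m.natAbs ≠ 2 * p.natAbs) :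
    ∃ ε < 1 / 3, 0 ≤ ε ∧ KroneckerApprox ![p, -p, m] ε := by
  obtain ⟨g, p', m', hg, hcop, rfl, rfl⟩ :=
    Int.exists_gcd_one' (Int.gcd_pos_of_ne_zero_left m hp)
  have ha : 0 < p'.natAbs := Int.natAbs_pos.mpr (left_ne_zero_of_mul hp)
  have hb : 0 < m'.natAbs := Int.natAbs_pos.mpr (left_ne_zero_of_mul hm)
  simp only [Int.natAbs_mul, Int.natAbs_natCast] at h1 h2
  have h6 : (6 : ℝ) < 4 * p'.natAbs + m'.natAbs := by
    have : m'.natAbs ≠ p'.natAbs := fun h => h1 (by rw [h])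
    have : m'.natAbs ≠ 2 * p'.natAbs := fun h => h2 (by rw [h, mul_assoc])
    exact_mod_cast (by omega : 6 < 4 * p'.natAbs + m'.natAbs)
  set a : ℝ := ↑p'.natAbs
  set b : ℝ := ↑m'.natAbs
  have hab : 0 < 4 * (a + b) := by positivity
  refine ⟨max (1 / 4) ((2 + b) / (4 * (a + b))), max_lt (by norm_num) ?_, by positivity, ?_⟩
  · rw [div_lt_iff₀ hab]; linarith
  refine ((kroneckerApprox_of_coprime ha hb hcop (le_max_left _ _) ?_).const_mul
    (d := g) (by omega)).of_natAbs_eq ?_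
  · have := le_max_right (1 / 4 : ℝ) ((2 + b) / (4 * (a + b)))
    rwa [div_le_iff₀ hab, mul_comm] at this
  · intro i
    fin_cases i <;> simp [Int.natAbs_mul, Int.natAbs_abs, mul_comm]

theorem Function.Periodic.intervalIntegral_comp_intCast_mul {E : Type*} [NormedAddCommGroup E]
    [NormedSpace ℝ E] {H : ℝ → E} (hH : Periodic H 1) (hHi : IntervalIntegrable H volume 0 1)
    {n : ℤ} (hn : n ≠ 0) : ∫ x in (0 : ℝ)..1, H (n * x) = ∫ x in (0 : ℝ)..1, H x := by
  have hn' : (n : ℝ) ≠ 0 := Int.cast_ne_zero.mpr hn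
  have := hH.intervalIntegral_add_zsmul_eq n 0 (hH.intervalIntegrable₀ one_ne_zero hHi)
  rw [intervalIntegral.integral_comp_mul_left _ hn', mul_zero, mul_one]
  simp only [zero_add, zsmul_eq_mul, mul_one] at this
  rw [this, ← Int.cast_smul_eq_zsmul ℝ, inv_smul_smul₀ hn']

theorem fourierChar_intCast (k : ℤ) : 𝐞 k = 1 := by
  rw [← Circle.coe_eq_one, fourierChar_apply]
  convert Complex.exp_int_mul_two_pi_mul_I k using 2
  push_cast; ring

theorem fourierChar_eq_one_iff (t : ℝ) : 𝐞 t = 1 ↔ ∃ k : ℤ, t = k := by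
  refine ⟨fun h => ?_, fun ⟨k, hk⟩ => hk ▸ fourierChar_intCast k⟩
  rw [← Circle.coe_eq_one, fourierChar_apply, Complex.exp_eq_one_iff] at h
  obtain ⟨k, hk⟩ := h
  refine ⟨k, ?_⟩
  have : ((2 * π * t : ℝ) : ℂ) * I = ((2 * π * k : ℝ) : ℂ) * I := by
    rw [hk]; push_cast; ring
  have hπ : 2 * π ≠ 0 := by positivity
  exact mul_left_cancel₀ hπ (Complex.ofReal_injective (mul_right_cancel₀ Complex.I_ne_zero this))

theorem continuous_fourierChar_const_mul (c : ℝ) : Continuous fun x : ℝ => (𝐞 (c * x) : ℂ) :=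
  continuous_subtype_val.comp (continuous_fourierChar.comp (continuous_const_mul c))

theorem intervalIntegral_fourierChar_mul {c : ℝ} (hc : c ≠ 0) (a b : ℝ) :
    ∫ y in a..b, (𝐞 (c * y) : ℂ) = (𝐞 (c * b) - 𝐞 (c * a)) / (2 * π * I * c) := by
  have h : ∀ y : ℝ, (𝐞 (c * y) : ℂ) = Complex.exp ((2 * π * I * c) * y) := fun y => by
    rw [fourierChar_apply]; push_cast; ring_nf
  simp_rw [h]
  exact integral_exp_mul_complex (by simp [hc, pi_ne_zero, Complex.I_ne_zero])

theorem norm_intervalIntegral_fourierChar (ε : ℝ) :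
    ‖∫ y in ε..1 - ε, (𝐞 y : ℂ)‖ = |sin (2 * π * ε)| / π := by
  have := intervalIntegral_fourierChar_mul one_ne_zero ε (1 - ε)
  simp only [one_mul] at this
  have hsin : (𝐞 (1 - ε) : ℂ) - 𝐞 ε = -2 * I * Real.sin (2 * π * ε) := by
    have h1 : (1 - ε : ℝ) = -ε + ((1 : ℤ) : ℝ) := by push_cast; ring
    rw [h1, AddChar.map_add_eq_mul, fourierChar_intCast, mul_one, fourierChar_apply,
      fourierChar_apply, Complex.ofReal_sin, mul_neg, Complex.ofReal_neg, neg_mul]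
    have := Complex.two_sin (2 * π * ε : ℝ)
    rw [neg_mul] at this
    linear_combination I * this + (Complex.exp (-((2 * π * ε : ℝ) * I))
      - Complex.exp ((2 * π * ε : ℝ) * I)) * Complex.I_mul_I
  rw [this, hsin, norm_div]
  simp only [norm_mul, norm_neg, Complex.norm_real, Complex.norm_I, Complex.norm_ofNat,
    Complex.ofReal_one, mul_one, Real.norm_eq_abs, abs_of_pos pi_pos]
  field_simp

theorem IntervalIntegrable.ofReal_mul {f : ℝ → ℝ} {a b : ℝ} (hf : IntervalIntegrable f volume a b)
    {u : ℝ → ℂ} (hu : Continuous u) : IntervalIntegrable (fun x => (f x : ℂ) * u x) volume a b :=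
  IntervalIntegrable.mul_continuousOn ⟨hf.1.ofReal, hf.2.ofReal⟩ hu.continuousOn

theorem intervalIntegral_fourierChar_intCast_mul {m : ℤ} (hm : m ≠ 0) :
    ∫ x in (0 : ℝ)..1, (𝐞 (m * x) : ℂ) = 0 := by
  rw [intervalIntegral_fourierChar_mul (Int.cast_ne_zero.mpr hm), mul_one, mul_zero,
    fourierChar_intCast, ← Int.cast_zero, fourierChar_intCast, sub_self, zero_div]

theorem intervalIntegral_comp_intCast_mul_mul_fourierChar_eq_zero {F : ℝ → ℂ} (hF : Periodic F 1)
    {n m : ℤ} (hnm : ¬ n ∣ m) : ∫ x in (0 : ℝ)..1, F (n * x) * 𝐞 (m * x) = 0 := by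
  rcases eq_or_ne n 0 with rfl | hn
  · simp only [Int.cast_zero, zero_mul, intervalIntegral.integral_const_mul,
      intervalIntegral_fourierChar_intCast_mul (mt zero_dvd_iff.mpr hnm), mul_zero]
  have hn' : (n : ℝ) ≠ 0 := Int.cast_ne_zero.mpr hn
  set G : ℝ → ℂ := fun x => F (n * x) * 𝐞 (m * x)
  have hG : Periodic G 1 := fun x => by
    have hFn : F (n * x + n) = F (n * x) := by simpa using hF.int_mul n (n * x)
    simp only [G, mul_add, mul_one, hFn, AddChar.map_add_eq_mul, fourierChar_intCast, mul_one]
  -- Shifting by `1 / n` leaves `F (n x)` unchanged and multiplies `𝐞 (m x)` by `𝐞 (m / n) ≠ 1`.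
  have hshift : ∀ x, G (x + 1 / n) = 𝐞 (m / n) * G x := fun x => by
    have hx : (n : ℝ) * (x + 1 / n) = n * x + 1 := by field_simp
    have hm : (m : ℝ) * (x + 1 / n) = m * x + m / n := by ring
    simp only [G, hx, hF (n * x), hm, AddChar.map_add_eq_mul, Circle.coe_mul]
    ring
  have hω : (𝐞 (m / n) : ℂ) ≠ 1 := by
    rw [Ne, Circle.coe_eq_one, fourierChar_eq_one_iff]
    rintro ⟨k, hk⟩
    rw [div_eq_iff hn'] at hk
    exact hnm ⟨k, by exact_mod_cast hk.trans (mul_comm _ _)⟩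
  have h : ∫ x in (0 : ℝ)..1, G x = 𝐞 (m / n) * ∫ x in (0 : ℝ)..1, G x := by
    rw [← intervalIntegral.integral_const_mul]
    simp_rw [← hshift]
    rw [intervalIntegral.integral_comp_add_right, zero_add, add_comm,
      hG.intervalIntegral_add_eq (1 / n) 0, zero_add]
  have h' : ((𝐞 (m / n) : ℂ) - 1) * ∫ x in (0 : ℝ)..1, G x = 0 := by
    rw [sub_mul, one_mul, ← h, sub_self]
  exact (mul_eq_zero.mp h').resolve_left (sub_ne_zero.mpr hω)

theorem norm_intervalIntegral_mul_fourierChar_le_sub_one {f : ℝ → ℝ} (hf : ∀ x, 1 ≤ f x)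
    (hfi : IntervalIntegrable f volume 0 1) {m : ℤ} (hm : m ≠ 0) :
    ‖∫ x in (0 : ℝ)..1, (f x : ℂ) * 𝐞 (m * x)‖ ≤ (∫ x in (0 : ℝ)..1, f x) - 1 := by
  have he := continuous_fourierChar_const_mul m
  -- Subtracting the constant `1` does not change a nonzero Fourier coefficient.
  have hsub : ∫ x in (0 : ℝ)..1, (f x : ℂ) * 𝐞 (m * x)
      = ∫ x in (0 : ℝ)..1, ((f x - 1 : ℝ) : ℂ) * 𝐞 (m * x) := by
    simp only [Complex.ofReal_sub, Complex.ofReal_one, sub_mul, one_mul]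
    rw [intervalIntegral.integral_sub (hfi.ofReal_mul he) (he.intervalIntegrable 0 1),
      intervalIntegral_fourierChar_intCast_mul hm, sub_zero]
  have hnorm : ∀ x ∈ uIcc (0 : ℝ) 1, ‖((f x - 1 : ℝ) : ℂ) * 𝐞 (m * x)‖ = f x - 1 := fun x _ => by
    rw [norm_mul, Circle.norm_coe, mul_one, Complex.norm_real, Real.norm_of_nonneg]
    linarith [hf x]
  rw [hsub]
  refine (intervalIntegral.norm_integral_le_integral_norm zero_le_one).trans_eq ?_
  rw [intervalIntegral.integral_congr hnorm,
    intervalIntegral.integral_sub hfi intervalIntegrable_const]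
  simp

noncomputable def farIndicator (ε : ℝ) : ℝ → ℝ := {t | ε < distNearestInt t}.indicator 1

section farIndicator

variable {ε : ℝ}

theorem farIndicator_periodic (ε : ℝ) : Periodic (farIndicator ε) 1 := fun t => by
  have h := distNearestInt_add_intCast t 1
  rw [Int.cast_one] at h
  simp only [farIndicator, Set.indicator_apply, Set.mem_ofPred_eq, h, Pi.one_apply]

theorem measurable_farIndicator (ε : ℝ) : Measurable (farIndicator ε) :=
  measurable_one.indicator (measurableSet_lt measurable_const continuous_distNearestInt.measurable)

theorem farIndicator_nonneg (ε t : ℝ) : 0 ≤ farIndicator ε t :=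
  Set.indicator_nonneg (fun _ _ => zero_le_one) t

theorem farIndicator_le_one (ε t : ℝ) : farIndicator ε t ≤ 1 :=
  Set.indicator_le_self' (fun _ _ => zero_le_one) t

theorem farIndicator_eq_one {t : ℝ} (h : ε < distNearestInt t) : farIndicator ε t = 1 :=
  Set.indicator_of_mem (s := {t | ε < distNearestInt t}) h 1

theorem farIndicator_eqOn_Icc :
    EqOn (farIndicator ε) ((Ioo ε (1 - ε)).indicator 1) (Icc 0 1) := fun y hy => by
  have hmem : y ∈ {t | ε < distNearestInt t} ↔ y ∈ Ioo ε (1 - ε) := by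
    simp only [Set.mem_ofPred_eq, distNearestInt_of_mem_Icc hy, lt_min_iff, Set.mem_Ioo]
    constructor <;> rintro ⟨h1, h2⟩ <;> constructor <;> linarith
  simp only [farIndicator, Set.indicator_apply, hmem]

theorem intervalIntegral_farIndicator_mul (hε₀ : 0 ≤ ε) (hε₁ : ε ≤ 1 / 2) (u : ℝ → ℂ) :
    ∫ y in (0 : ℝ)..1, (farIndicator ε y : ℂ) * u y = ∫ y in ε..1 - ε, u y := by
  have h : EqOn (fun y => (farIndicator ε y : ℂ) * u y) ((Ioo ε (1 - ε)).indicator u) (uIcc 0 1) :=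
    fun y hy => by
      rw [uIcc_of_le zero_le_one] at hy
      simp only [farIndicator_eqOn_Icc hy, Set.indicator_apply]
      split_ifs <;> simp
  rw [intervalIntegral.integral_congr h, intervalIntegral.integral_of_le zero_le_one,
    intervalIntegral.integral_of_le (by linarith), setIntegral_indicator measurableSet_Ioo,
    Set.inter_eq_right.mpr (Ioo_subset_Ioc_self.trans (Ioc_subset_Ioc hε₀ (by linarith))),
    integral_Ioc_eq_integral_Ioo]

theorem intervalIntegrable_farIndicator_comp {φ : ℝ → ℝ} (hφ : Measurable φ) (a b : ℝ) :
    IntervalIntegrable (fun x => farIndicator ε (φ x)) volume a b :=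
  (intervalIntegrable_const (c := (1 : ℝ))).mono_fun
    ((measurable_farIndicator ε).comp hφ).aestronglyMeasurable
    (Filter.Eventually.of_forall fun x => by
      simp [abs_of_nonneg (farIndicator_nonneg ε _), farIndicator_le_one])

theorem intervalIntegral_farIndicator_comp_mul_fourierChar (hε₀ : 0 ≤ ε) (hε₁ : ε ≤ 1 / 2)
    {n : ℤ} (hn : n ≠ 0) (θ : ℝ) (j : ℤ) :
    ∫ x in (0 : ℝ)..1, (farIndicator ε (n * x - θ) : ℂ) * 𝐞 (j * n * x)
      = 𝐞 (j * θ) * ∫ y in ε..1 - ε, (𝐞 (j * y) : ℂ) := by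
  set H : ℝ → ℂ := fun y => (farIndicator ε (y - θ) : ℂ) * 𝐞 (j * y)
  have hH : Periodic H 1 := fun y => by
    have hχ : farIndicator ε (y + 1 - θ) = farIndicator ε (y - θ) := by
      rw [add_sub_right_comm, farIndicator_periodic]
    have he : 𝐞 (j * (y + 1)) = 𝐞 (j * y) := by
      rw [mul_add_one, AddChar.map_add_eq_mul, fourierChar_intCast, mul_one]
    simp only [H, hχ, he]
  have hHi : IntervalIntegrable H volume 0 1 :=
    (intervalIntegrable_farIndicator_comp (measurable_id.sub_const θ) 0 1).ofReal_mul
      (continuous_fourierChar_const_mul _)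
  calc ∫ x in (0 : ℝ)..1, (farIndicator ε (n * x - θ) : ℂ) * 𝐞 (j * n * x)
      = ∫ x in (0 : ℝ)..1, H (n * x) := by simp only [H, mul_assoc]
    _ = ∫ y in (0 : ℝ)..1, H (y + θ) := by
      rw [hH.intervalIntegral_comp_intCast_mul hHi hn, intervalIntegral.integral_comp_add_right,
        zero_add, add_comm, hH.intervalIntegral_add_eq θ 0, zero_add]
    _ = ∫ y in (0 : ℝ)..1, 𝐞 (j * θ) * ((farIndicator ε y : ℂ) * 𝐞 (j * y)) := by
      congr 1 with y
      simp only [H, add_sub_cancel_right, mul_add, AddChar.map_add_eq_mul, Circle.coe_mul]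
      ring
    _ = _ := by
      rw [intervalIntegral.integral_const_mul, intervalIntegral_farIndicator_mul hε₀ hε₁]

theorem intervalIntegral_farIndicator_comp_mul (hε₀ : 0 ≤ ε) (hε₁ : ε ≤ 1 / 2) {n : ℤ}
    (hn : n ≠ 0) (θ : ℝ) : ∫ x in (0 : ℝ)..1, farIndicator ε (n * x - θ) = 1 - 2 * ε := by
  have h := intervalIntegral_farIndicator_comp_mul_fourierChar hε₀ hε₁ hn θ 0
  simp only [Int.cast_zero, zero_mul, AddChar.map_zero_eq_one, Circle.coe_one, mul_one, one_mul,
    intervalIntegral.integral_ofReal, intervalIntegral.integral_const, Complex.real_smul] at h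
  apply Complex.ofReal_injective
  rw [h]
  push_cast
  ring

end farIndicator

noncomputable def farCount {ι : Type*} [Fintype ι] (ε : ℝ) (k : ι → ℤ) (θ : ι → ℝ) (x : ℝ) : ℝ :=
  ∑ i, farIndicator ε (k i * x - θ i)

section farCount

variable {ι : Type*} [Fintype ι] {ε : ℝ} {k : ι → ℤ} (θ : ι → ℝ)

theorem one_le_farCount {x : ℝ} {i : ι} (hi : ε < distNearestInt (k i * x - θ i)) :
    1 ≤ farCount ε k θ x :=
  (farIndicator_eq_one hi).symm.le.trans
    (Finset.single_le_sum (fun j _ => farIndicator_nonneg ε (k j * x - θ j)) (Finset.mem_univ i))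

theorem intervalIntegrable_farCount (a b : ℝ) : IntervalIntegrable (farCount ε k θ) volume a b := by
  change IntervalIntegrable (fun x => ∑ i, farIndicator ε (k i * x - θ i)) volume a b
  simpa only [Finset.sum_fn] using
    IntervalIntegrable.sum Finset.univ fun i _ =>
      intervalIntegrable_farIndicator_comp (by fun_prop) a b

theorem intervalIntegral_farCount (hε₀ : 0 ≤ ε) (hε₁ : ε ≤ 1 / 2) (hk : ∀ i, k i ≠ 0) :
    ∫ x in (0 : ℝ)..1, farCount ε k θ x = Fintype.card ι * (1 - 2 * ε) := by
  simp only [farCount]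
  rw [intervalIntegral.integral_finsetSum
    fun i _ => intervalIntegrable_farIndicator_comp (by fun_prop) 0 1]
  simp [intervalIntegral_farIndicator_comp_mul hε₀ hε₁ (hk _)]
  ring

theorem intervalIntegral_farCount_mul_fourierChar (hε₀ : 0 ≤ ε) (hε₁ : ε ≤ 1 / 2) {i₀ : ι}
    (hk₀ : k i₀ ≠ 0) (hdvd : ∀ i ≠ i₀, ¬ k i ∣ k i₀) :
    ∫ x in (0 : ℝ)..1, (farCount ε k θ x : ℂ) * 𝐞 (k i₀ * x)
      = 𝐞 (θ i₀) * ∫ y in ε..1 - ε, (𝐞 y : ℂ) := by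
  have h₀ := intervalIntegral_farIndicator_comp_mul_fourierChar hε₀ hε₁ hk₀ (θ i₀) 1
  simp only [Int.cast_one, one_mul] at h₀
  simp only [farCount, Complex.ofReal_sum, Finset.sum_mul]
  rw [intervalIntegral.integral_finsetSum fun i _ =>
      (intervalIntegrable_farIndicator_comp (by fun_prop) 0 1).ofReal_mul
        (continuous_fourierChar_const_mul _),
    Finset.sum_eq_single i₀ (fun i _ hi => ?_) (by simp), h₀]
  exact intervalIntegral_comp_intCast_mul_mul_fourierChar_eq_zero
    (F := fun t => (farIndicator ε (t - θ i) : ℂ))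
    (fun t => by simp [add_sub_right_comm, farIndicator_periodic ε (t - θ i)]) (hdvd i hi)

end farCount

theorem kroneckerApprox_of_not_dvd {ι : Type*} [Fintype ι] {k : ι → ℤ} (hk : ∀ i, k i ≠ 0)
    {i₀ : ι} (hdvd : ∀ i ≠ i₀, ¬ k i ∣ k i₀) {ε : ℝ} (hε₀ : 0 ≤ ε) (hε₁ : ε ≤ 1 / 2)
    (hε : Fintype.card ι * (1 - 2 * ε) - 1 < |sin (2 * π * ε)| / π) : KroneckerApprox k ε := by
  intro θ
  by_contra! hfar
  have h := norm_intervalIntegral_mul_fourierChar_le_sub_one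
    (fun x => (hfar x).elim fun i hi => one_le_farCount θ hi) (intervalIntegrable_farCount θ 0 1)
    (hk i₀)
  rw [intervalIntegral_farCount_mul_fourierChar θ hε₀ hε₁ (hk i₀) hdvd, norm_mul, Circle.norm_coe,
    one_mul, norm_intervalIntegral_fourierChar, intervalIntegral_farCount θ hε₀ hε₁ hk] at h
  linarith

theorem kroneckerApprox_three_tenths_of_injective {ι : Type*} [Fintype ι] [Nonempty ι] {k : ι → ℤ}
    (hk : ∀ i, k i ≠ 0) (hinj : Injective fun i => (k i).natAbs) (hcard : Fintype.card ι ≤ 3) :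
    KroneckerApprox k (3 / 10) := by
  obtain ⟨i₀, -, hmin⟩ := Finset.exists_min_image Finset.univ (fun i => (k i).natAbs)
    Finset.univ_nonempty
  refine kroneckerApprox_of_not_dvd hk (i₀ := i₀) (fun i hi hdvd => hi (hinj ?_))
    (by norm_num) (by norm_num) ?_
  · exact le_antisymm (Int.natAbs_le_of_dvd_ne_zero hdvd (hk i₀)) (hmin i (Finset.mem_univ i))
  -- `sin (3π/5) = sin (2π/5) ≥ 4/5` by Jordan's inequality.
  have hsin : 4 / 5 ≤ |sin (2 * π * (3 / 10))| := by
    have h := mul_le_sin (x := 2 * π / 5) (by positivity) (by linarith [pi_pos])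
    rw [show 2 * π * (3 / 10) = π - 2 * π / 5 by ring, sin_pi_sub]
    rw [show 2 / π * (2 * π / 5) = 4 / 5 by field_simp; ring] at h
    exact h.trans (le_abs_self _)
  have hcard' : (Fintype.card ι : ℝ) ≤ 3 := by exact_mod_cast hcard
  rw [lt_div_iff₀ pi_pos]
  nlinarith [pi_lt_four, pi_pos]

theorem angularKronecker_le_of_natAbs_ne {a b c : ℤ} (ha : a ≠ 0) (hb : b ≠ 0) (hc : c ≠ 0)
    (hab : a.natAbs ≠ b.natAbs) (hac : a.natAbs ≠ c.natAbs) (hbc : b.natAbs ≠ c.natAbs) :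
    angularKronecker {a, b, c} ≤ 3 / 10 := by
  refine KroneckerApprox.angularKronecker_le (k := ![a, b, c]) (by simp [Set.subset_def])
    (by norm_num) (kroneckerApprox_three_tenths_of_injective ?_ ?_ (by simp))
  · intro i; fin_cases i <;> assumption
  · intro i j h; fin_cases i <;> fin_cases j <;> simp_all [eq_comm]

theorem angularKronecker_neg_pair_lt {p m : ℤ} (hp : p ≠ 0) (hm : m ≠ 0) (hmp : m ≠ p)
    (hmp' : m ≠ -p) (hform : ¬ ∃ n : ℤ, ({p, -p, m} : Finset ℤ) = {-n, n, 2 * n}) :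
    angularKronecker {p, -p, m} < 1 / 3 := by
  have h2 : m.natAbs ≠ 2 * p.natAbs := fun h => by
    rcases Int.natAbs_eq_natAbs_iff.mp (h.trans (Int.natAbs_mul 2 p).symm) with rfl | rfl
    · exact hform ⟨p, Finset.insert_comm _ _ _⟩
    · exact hform ⟨-p, by rw [neg_neg, mul_neg]⟩
  obtain ⟨ε, hε, hε₀, h⟩ := exists_kroneckerApprox_neg_pair hp hm (by omega) h2
  exact (h.angularKronecker_le (by simp [Set.subset_def]) hε₀).trans_lt hε

theorem alpha_lt_one_third (n₁ n₂ n₃ : ℤ)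
    (hn₁ : n₁ ≠ 0) (hn₂ : n₂ ≠ 0) (hn₃ : n₃ ≠ 0)
    (h12 : n₁ ≠ n₂) (h13 : n₁ ≠ n₃) (h23 : n₂ ≠ n₃)
    (hform : ¬ ∃ n : ℤ, ({n₁, n₂, n₃} : Finset ℤ) = {-n, n, 2 * n}) :
    angularKronecker {n₁, n₂, n₃} < 1 / 3 := by
  rcases em (n₂ = -n₁) with rfl | h₂
  · exact angularKronecker_neg_pair_lt hn₁ hn₃ h13.symm h23.symm hform
  rcases em (n₃ = -n₁) with rfl | h₃
  · rw [Finset.pair_comm] at hform ⊢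
    exact angularKronecker_neg_pair_lt hn₁ hn₂ h12.symm h23 hform
  rcases em (n₃ = -n₂) with rfl | h₃'
  · rw [Finset.insert_comm, Finset.pair_comm n₁] at hform ⊢
    exact angularKronecker_neg_pair_lt hn₂ hn₁ h12 (by omega) hform
  · exact (angularKronecker_le_of_natAbs_ne hn₁ hn₂ hn₃ (by omega) (by omega) (by omega)).trans_lt
      (by norm_num)
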